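/- Let X be a real random variable on a probability space with E[X] = 0. Let K > 0 be such that the random variable exp(|X|/K) is integrable and E[exp(|X|/K)] ≤ 2. Then for every real h with |h|·K ≤ 1, E[exp(hX)] ≤ 1 + h²K² ≤ exp(h²K²). -/

import Mathlib

/-!
Write `ψ(u) = exp u - 1 - u`. Pointwise, `ψ(t) ≤ ψ(|t|)` and, by convexity of `exp`,
`ψ(a u) ≤ a² ψ(u)` for `0 ≤ a ≤ 1` and `u ≥ 0`; with `a = |h| K` and `u = |x| / K` this gives
`exp (h x) ≤ 1 + h x + h² K² (exp (|x| / K) - 1)`. Taking expectations, the linear term vanishes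
since `E X = 0`, and `E exp (|X| / K) - 1 ≤ 1`.
-/

open MeasureTheory ProbabilityTheory Real

lemma exp_sub_one_sub_le_abs (t : ℝ) : exp t - 1 - t ≤ exp |t| - 1 - |t| := by
  rcases le_or_gt 0 t with ht | ht
  · rw [abs_of_nonneg ht]
  · have hsinh : -t ≤ sinh (-t) := self_le_sinh_iff.2 (by linarith)
    rw [sinh_eq, neg_neg] at hsinh
    rw [abs_of_neg ht]
    linarith

lemma exp_mul_sub_one_sub_le {a : ℝ} (ha₀ : 0 ≤ a) (ha₁ : a ≤ 1) {u : ℝ} (hu : 0 ≤ u) :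
    exp (a * u) - 1 - a * u ≤ a ^ 2 * (exp u - 1 - u) := by
  set g : ℝ → ℝ := fun u ↦ a ^ 2 * (exp u - 1 - u) - (exp (a * u) - 1 - a * u)
  have hg : ∀ x, HasDerivAt g (a * (a * (exp x - 1) - (exp (a * x) - 1))) x := by
    intro x
    have hax : HasDerivAt (fun x ↦ a * x) a x := by simpa using (hasDerivAt_id x).const_mul a
    refine HasDerivAt.congr_deriv (f' := a ^ 2 * (exp x - 1) - (exp (a * x) * a - a)) ?_ (by ring)
    exact (((hasDerivAt_exp x).sub_const 1).sub (hasDerivAt_id x)).const_mul (a ^ 2) |>.sub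
      ((((hasDerivAt_exp (a * x)).comp x hax).sub_const 1).sub hax)
  have hg_mono : Monotone g := by
    refine monotone_of_deriv_nonneg (fun x ↦ (hg x).differentiableAt) fun x ↦ ?_
    rw [(hg x).deriv]
    have hconv : exp (a * x) ≤ a * exp x + (1 - a) := by
      simpa using convexOn_exp.2 (Set.mem_univ x) (Set.mem_univ 0) ha₀ (by linarith) (by ring)
    have hgap : 0 ≤ a * (exp x - 1) - (exp (a * x) - 1) := by linarith
    positivity
  have hg_zero_le := hg_mono hu
  simp only [g, mul_zero, exp_zero] at hg_zero_le
  linarith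

lemma exp_mul_sub_one_sub_le_sq_mul {a : ℝ} (ha : |a| ≤ 1) (t : ℝ) :
    exp (a * t) - 1 - a * t ≤ a ^ 2 * (exp |t| - 1 - |t|) := calc
  exp (a * t) - 1 - a * t ≤ exp (|a| * |t|) - 1 - |a| * |t| := by
    simpa only [abs_mul] using exp_sub_one_sub_le_abs (a * t)
  _ ≤ |a| ^ 2 * (exp |t| - 1 - |t|) := exp_mul_sub_one_sub_le (abs_nonneg a) ha (abs_nonneg t)
  _ = a ^ 2 * (exp |t| - 1 - |t|) := by rw [sq_abs]

lemma exp_mul_le_of_abs_mul_le_one {h K : ℝ} (hK : 0 < K) (hh : |h| * K ≤ 1) (x : ℝ) :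
    exp (h * x) ≤ 1 + h * x + h ^ 2 * K ^ 2 * (exp (|x| / K) - 1) := by
  have hhK : |h * K| ≤ 1 := by rwa [abs_mul, abs_of_pos hK]
  have key := exp_mul_sub_one_sub_le_sq_mul hhK (x / K)
  rw [mul_assoc, mul_div_cancel₀ x hK.ne', abs_div, abs_of_pos hK, mul_pow] at key
  have : 0 ≤ h ^ 2 * K ^ 2 * (|x| / K) := by positivity
  linarith

lemma exp_mul_le_exp_abs_div {h K : ℝ} (hK : 0 < K) (hh : |h| * K ≤ 1) (x : ℝ) :
    exp (h * x) ≤ exp (|x| / K) := by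
  refine exp_le_exp.2 (le_trans (le_abs_self _) ?_)
  rw [abs_mul, le_div_iff₀ hK, mul_right_comm]
  exact mul_le_of_le_one_left (abs_nonneg x) hh

/-- If `E X = 0` and `K > 0` is admissible for the `ψ₁` Orlicz norm of `X`
(i.e. `E[exp(|X|/K)] ≤ 2`), then for every real `h` with `|h| K ≤ 1`,
`E[exp(hX)] ≤ 1 + h² K² ≤ exp(h² K²)`. -/
theorem mgf_le_of_psi1_norm_le {Ω : Type*} [MeasureSpace Ω]
    [IsProbabilityMeasure (ℙ : Measure Ω)] (X : Ω → ℝ)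
    (hXint : Integrable X) (hmean : ∫ ω, X ω = 0)
    (K : ℝ) (hK : 0 < K)
    (hint : Integrable (fun ω => Real.exp (|X ω| / K)))
    (horlicz : ∫ ω, Real.exp (|X ω| / K) ≤ 2)
    (h : ℝ) (hh : |h| * K ≤ 1) :
    (∫ ω, Real.exp (h * X ω)) ≤ 1 + h ^ 2 * K ^ 2 ∧
      1 + h ^ 2 * K ^ 2 ≤ Real.exp (h ^ 2 * K ^ 2) := by
  refine ⟨?_, by linarith [add_one_le_exp (h ^ 2 * K ^ 2)]⟩
  have hexp_int : Integrable fun ω ↦ exp (h * X ω) :=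
    hint.mono' (hXint.aemeasurable.const_mul h).exp.aestronglyMeasurable <| .of_forall fun ω ↦ by
      simpa only [norm_of_nonneg (exp_nonneg _)] using exp_mul_le_exp_abs_div hK hh (X ω)
  have hlin_int : Integrable fun ω ↦ 1 + h * X ω := (integrable_const 1).add (hXint.const_mul h)
  have hquad_int : Integrable fun ω ↦ h ^ 2 * K ^ 2 * (exp (|X ω| / K) - 1) :=
    (hint.sub (integrable_const 1)).const_mul _
  calc ∫ ω, exp (h * X ω)
      ≤ ∫ ω, (1 + h * X ω + h ^ 2 * K ^ 2 * (exp (|X ω| / K) - 1)) :=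
        integral_mono hexp_int (hlin_int.add hquad_int) fun ω ↦
          exp_mul_le_of_abs_mul_le_one hK hh (X ω)
    _ = 1 + h ^ 2 * K ^ 2 * ((∫ ω, exp (|X ω| / K)) - 1) := by
        rw [integral_add hlin_int hquad_int, integral_add (integrable_const 1) (hXint.const_mul h),
          integral_const_mul, integral_const_mul, integral_sub hint (integrable_const 1), hmean]
        simp
    _ ≤ 1 + h ^ 2 * K ^ 2 := by nlinarith [sq_nonneg (h * K)]
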